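/- arXiv:0912.2932 — 2 statements merged into one kernel-verified Lean document; each statement's English description precedes it below -/
import Mathlib

section
/- Let F_q be a finite field with q elements, and let p, m ≥ 2. If there exists a p×(m+p) matrix M over F_q all of whose p×p minors are nonzero, then q ≥ max{p, m} + 1. -/
/-!
Multiplying by the inverse of the last `p` columns brings an MDS matrix to the form `[A | 1]`,
and every `1 × 1` and `2 × 2` minor of `A` is a maximal minor of `[A | 1]`.
So for two rows `i ≠ k` of `A` the slopes `A i j / A k j` are nonzero and pairwise distinct,
whence `m ≤ q - 1`; the same argument applied to the columns of `A` gives `p ≤ q - 1`.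
-/

open Matrix Function

theorem Function.Injective.update_of_forall_ne {α β : Type*} [DecidableEq α] {f : α → β}
    (hf : Injective f) {a : α} {b : β} (hb : ∀ x ≠ a, f x ≠ b) :
    Injective (update f a b) := by
  intro x y hxy
  by_cases hx : x = a <;> by_cases hy : y = a <;>
    simp only [hx, hy, update_self, ne_eq, not_false_eq_true, update_of_ne] at hxy
  · exact hx.trans hy.symm
  · exact absurd hxy.symm (hb y hy)
  · exact absurd hxy (hb x hx)
  · exact hf hxy

namespace Matrix

variable {ι κ R : Type*} [Fintype ι] [DecidableEq ι]

theorem det_updateCol_one [CommRing R] (i : ι) (b : ι → R) :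
    (updateCol (1 : Matrix ι ι R) i b).det = b i := by
  rw [← cramer_apply, cramer_one]
  rfl

theorem det_updateCol_updateCol_one [CommRing R] {i k : ι} (hik : i ≠ k) (b c : ι → R) :
    ((updateCol (1 : Matrix ι ι R) i b).updateCol k c).det = b i * c k - c i * b k := by
  -- The matrix is `1 + U * V` with `U` of width two; use `det (1 + U * V) = det (1 + V * U)`.
  let U : Matrix ι (Fin 2) R :=
    of fun r => ![b r - (Pi.single i 1 : ι → R) r, c r - (Pi.single k 1 : ι → R) r]
  let V : Matrix (Fin 2) ι R := of ![Pi.single i 1, Pi.single k 1]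
  have hUV : (updateCol (1 : Matrix ι ι R) i b).updateCol k c = 1 + U * V := by
    ext r s
    by_cases hsk : s = k <;> by_cases hsi : s = i <;>
      simp_all [U, V, mul_apply, one_apply, Pi.single_apply, eq_comm]
  have hVU : 1 + V * U = !![b i, c i; b k, c k] := by
    ext t u
    fin_cases t <;> fin_cases u <;> simp [U, V, hik, hik.symm]
  rw [hUV, det_one_add_mul_comm, hVU, det_fin_two_of]

def IsMDS [CommRing R] (M : Matrix ι κ R) : Prop :=
  ∀ cols : ι → κ, Injective cols → (M.submatrix id cols).det ≠ 0

variable {F : Type*} [Field F]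

theorem IsMDS.submatrix_id {κ' : Type*} {M : Matrix ι κ F} (hM : M.IsMDS) {e : κ' → κ}
    (he : Injective e) : (M.submatrix id e).IsMDS := fun cols hcols =>
  hM (e ∘ cols) (he.comp hcols)

theorem IsMDS.mul_left {M : Matrix ι κ F} (hM : M.IsMDS) {P : Matrix ι ι F} (hP : P.det ≠ 0) :
    (P * M).IsMDS := by
  intro cols hcols
  rw [submatrix_mul P M id id cols bijective_id, submatrix_id_id, det_mul]
  exact mul_ne_zero hP (hM cols hcols)

theorem IsMDS.exists_fromCols_one {M : Matrix ι (κ ⊕ ι) F} (hM : M.IsMDS) :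
    ∃ A : Matrix ι κ F, (fromCols A (1 : Matrix ι ι F)).IsMDS := by
  have hP : (toCols₂ M).det ≠ 0 := hM Sum.inr Sum.inr_injective
  refine ⟨(toCols₂ M)⁻¹ * toCols₁ M, ?_⟩
  rw [← nonsing_inv_mul _ (Ne.isUnit hP), ← mul_fromCols, fromCols_toCols]
  exact hM.mul_left (isUnit_nonsing_inv_det _ (Ne.isUnit hP)).ne_zero

theorem IsMDS.fromCols_one_apply_ne_zero {A : Matrix ι κ F}
    (hA : (fromCols A (1 : Matrix ι ι F)).IsMDS) (i : ι) (j : κ) : A i j ≠ 0 := by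
  have hcols : Injective (update Sum.inr i (Sum.inl j) : ι → κ ⊕ ι) :=
    Sum.inr_injective.update_of_forall_ne fun _ _ => Sum.inr_ne_inl
  have hsub : (fromCols A (1 : Matrix ι ι F)).submatrix id (update Sum.inr i (Sum.inl j)) =
      updateCol 1 i fun r => A r j := by
    ext r s
    by_cases hs : s = i <;> simp [hs, one_apply]
  simpa [hsub, det_updateCol_one] using hA _ hcols

theorem IsMDS.fromCols_one_mul_ne_mul {A : Matrix ι κ F}
    (hA : (fromCols A (1 : Matrix ι ι F)).IsMDS) {i k : ι} {j l : κ} (hik : i ≠ k)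
    (hjl : j ≠ l) :
    A i j * A k l ≠ A i l * A k j := by
  let cols : ι → κ ⊕ ι := update (update Sum.inr i (Sum.inl j)) k (Sum.inl l)
  have hcols : Injective cols := by
    refine (Sum.inr_injective.update_of_forall_ne fun _ _ => Sum.inr_ne_inl).update_of_forall_ne
      fun x hx => ?_
    by_cases hxi : x = i <;> simp [hxi, hjl]
  have hsub : (fromCols A (1 : Matrix ι ι F)).submatrix id cols =
      (updateCol 1 i fun r => A r j).updateCol k fun r => A r l := by
    ext r s
    by_cases hsk : s = k <;> by_cases hsi : s = i <;>
      simp_all [cols, one_apply]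
  have := hA _ hcols
  rw [hsub, det_updateCol_updateCol_one hik] at this
  exact fun h => this (by rw [h]; ring)

end Matrix

theorem Matrix.card_lt_card_of_mul_ne_mul {ι κ F : Type*} [Fintype κ] [Field F] [Fintype F]
    (A : Matrix ι κ F) (hA : ∀ i j, A i j ≠ 0)
    (hA₂ : ∀ {i k j l}, i ≠ k → j ≠ l → A i j * A k l ≠ A i l * A k j) {i k : ι}
    (hik : i ≠ k) :
    Fintype.card κ < Fintype.card F := by
  classical
  let slope : κ → Fˣ := fun j => Units.mk0 (A i j / A k j) (div_ne_zero (hA i j) (hA k j))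
  have hslope : Injective slope := by
    intro j l hjl
    by_contra hne
    have h := congrArg Units.val hjl
    simp only [slope, Units.val_mk0, div_eq_div_iff (hA k j) (hA k l)] at h
    exact hA₂ hik hne h
  exact (Fintype.card_le_of_injective slope hslope).trans_lt (card_units_lt F)

/-- If there is a `p × (m+p)` matrix (`p, m ≥ 2`) over a finite field with `q` elements all of
whose `p × p` minors are nonzero, then `q ≥ max {p, m} + 1`. -/
theorem stmt5 (F : Type*) [Field F] [Fintype F] (q p m : ℕ) (hq : Fintype.card F = q)
    (hp : 2 ≤ p) (hm : 2 ≤ m)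
    (hex : ∃ M : Matrix (Fin p) (Fin (m + p)) F,
      ∀ cols : Fin p → Fin (m + p), Function.Injective cols →
        (M.submatrix id cols).det ≠ 0) :
    max p m + 1 ≤ q := by
  obtain ⟨M, hM : M.IsMDS⟩ := hex
  obtain ⟨A, hA⟩ := (hM.submatrix_id finSumFinEquiv.injective).exists_fromCols_one
  have hmq : m < q := by
    simpa [hq] using Matrix.card_lt_card_of_mul_ne_mul A hA.fromCols_one_apply_ne_zero
      hA.fromCols_one_mul_ne_mul (i := ⟨0, by omega⟩) (k := ⟨1, by omega⟩) (by simp)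
  have hpq : p < q := by
    simpa [hq] using Matrix.card_lt_card_of_mul_ne_mul Aᵀ
      (fun j i => hA.fromCols_one_apply_ne_zero i j)
      (fun hjl hik => by simpa [mul_comm] using hA.fromCols_one_mul_ne_mul hik hjl)
      (i := ⟨0, by omega⟩) (k := ⟨1, by omega⟩) (by simp)
  omega
end

section
/- Let F be a field and M(s) a p×(m+p) monomial matrix with MDS coefficient matrix M = [I_p R] and degree matrix d_{i,j} = j − i for j ≥ i and 0 otherwise, so that the Plücker coordinate indexed by α = (α_1 < ⋯ < α_p) is M_α s^{|α|} with |α| = Σ_i (α_i − i) and M_α ≠ 0. Then for every full-rank m×(m+p) matrix [K_1 K_2] over F, the polynomial det [[K_1, K_2],[N(s), D(s)]] = Σ_α k_α M_α s^{|α|} is not the zero polynomial, where k_α is (up to sign) the m×m minor of [K_1 K_2] on the columns complementary to α. -/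
/-!
Row reduction multiplies the determinant by the determinant of the transforming matrix, so we may
assume that row `i` of `K` has its leading entry in column `q i`, with `q` injective. Give row `i`
of `K` the weight `q i`, row `k` of `M(s)` the weight `k` and column `j` the weight `j`: every entry
then has degree at most (column weight − row weight), so the coefficient of `s ^ N` in the
determinant, `N` being the difference of the total weights, is the determinant of the matrix of
these top coefficients. That matrix has the pivots `K i (q i)` in the rows of `K` and `Mcoef` below
them, and it is nonsingular because `Mcoef` is nonsingular on the non-pivot columns (MDS).
-/

open Polynomial

theorem Polynomial.coeff_prod_sum_of_natDegree_le {R ι : Type*} [CommSemiring R]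
    (s : Finset ι) (f : ι → R[X]) (e : ι → ℕ) (h : ∀ i ∈ s, (f i).natDegree ≤ e i) :
    (∏ i ∈ s, f i).coeff (∑ i ∈ s, e i) = ∏ i ∈ s, (f i).coeff (e i) := by
  classical
  induction s using Finset.induction_on with
  | empty => simp
  | insert a s ha ih =>
    have hs : ∀ i ∈ s, (f i).natDegree ≤ e i := fun i hi => h i (Finset.mem_insert_of_mem hi)
    rw [Finset.prod_insert ha, Finset.sum_insert ha, Finset.prod_insert ha,
      coeff_mul_add_eq_of_natDegree_le (h a (Finset.mem_insert_self a s))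
        (natDegree_prod_le (s := s) (f := f) |>.trans (Finset.sum_le_sum hs)), ih hs]

namespace Matrix

theorem coeff_det_eq_det_coeff {n R : Type*} [Fintype n] [DecidableEq n] [CommRing R]
    (A : Matrix n n R[X]) (a b : n → ℕ) (hA : ∀ i j k, (A i j).coeff k ≠ 0 → k + a i ≤ b j)
    {N : ℕ} (hN : N + ∑ i, a i = ∑ j, b j) :
    A.det.coeff N = (of fun i j => (A i j).coeff (b j - a i)).det := by
  simp only [det_apply, finsetSum_coeff, coeff_smul, of_apply]
  refine Finset.sum_congr rfl fun σ _ => ?_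
  by_cases hσ : ∀ i, a (σ i) ≤ b i
  · have hdeg : ∀ i ∈ Finset.univ, (A (σ i) i).natDegree ≤ b i - a (σ i) := fun i _ =>
      natDegree_le_iff_coeff_eq_zero.mpr fun k hk => by
        by_contra h
        have := hA _ _ k h
        omega
    have hsum : N = ∑ i, (b i - a (σ i)) := by
      rw [Finset.sum_tsub_distrib _ fun i _ => hσ i, Equiv.sum_comp σ a]
      omega
    rw [hsum, coeff_prod_sum_of_natDegree_le _ _ _ hdeg]
  · push Not at hσ
    obtain ⟨i, hi⟩ := hσ
    have hzero : A (σ i) i = 0 := Polynomial.ext fun k => by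
      by_contra h
      have := hA _ _ k h
      omega
    rw [Finset.prod_eq_zero (f := fun j => A (σ j) j) (Finset.mem_univ i) hzero,
      Finset.prod_eq_zero (f := fun j => (A (σ j) j).coeff (b j - a (σ j))) (Finset.mem_univ i)
        (by rw [hzero, coeff_zero]), coeff_zero]

theorem det_ne_zero_of_det_coeff_ne_zero {n R : Type*} [Fintype n] [DecidableEq n]
    [CommRing R]
    (A : Matrix n n R[X]) (a b : n → ℕ) (hA : ∀ i j k, (A i j).coeff k ≠ 0 → k + a i ≤ b j)
    (hlead : (of fun i j => (A i j).coeff (b j - a i)).det ≠ 0) : A.det ≠ 0 := by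
  have hterm := hlead
  rw [det_apply] at hterm
  -- a nonzero term of the top-coefficient determinant shows that `∑ b - ∑ a` does not truncate
  obtain ⟨σ, -, hσ⟩ := Finset.exists_ne_zero_of_sum_ne_zero hterm
  have hle : ∀ i, a (σ i) ≤ b i := fun i => by
    by_contra hlt
    refine hσ ?_
    rw [Finset.prod_eq_zero (Finset.mem_univ i), smul_zero]
    by_contra h
    have := hA _ _ _ h
    omega
  have hsum : ∑ i, a i ≤ ∑ j, b j := by
    rw [← Equiv.sum_comp σ a]
    exact Finset.sum_le_sum fun i _ => hle i
  rw [← coeff_det_eq_det_coeff A a b hA (Nat.sub_add_cancel hsum)] at hlead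
  exact fun h => hlead (by rw [h, coeff_zero])

theorem det_submatrix_fromRows_mul_left {m n p R : Type*} [Fintype m] [Fintype n] [Fintype p]
    [DecidableEq m] [DecidableEq n] [DecidableEq p] [CommRing R]
    (U : Matrix m m R) (K : Matrix m n R) (B : Matrix p n R) (e : n ≃ m ⊕ p) :
    ((fromRows (U * K) B).submatrix e id).det = U.det * ((fromRows K B).submatrix e id).det := by
  have hfactor :
      fromRows (U * K) B = (fromBlocks U 0 0 1 : Matrix (m ⊕ p) (m ⊕ p) R) * fromRows K B := by
    rw [fromBlocks_mul_fromRows]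
    simp
  rw [hfactor, ← submatrix_mul_equiv _ _ _ e, det_mul, det_submatrix_equiv_self,
    det_fromBlocks_zero₂₁, det_one, mul_one]

theorem exists_mul_isLeadingEntry_injective {m n F : Type*} [Fintype m] [Fintype n]
    [LinearOrder n] [Field F] (K : Matrix m n F) (hK : K.rank = Fintype.card m) :
    ∃ (U : Matrix m m F) (q : m → n),
      Function.Injective q ∧ ∀ i, (U * K).IsLeadingEntry i (q i) := by
  classical
  set W := Submodule.span F (Set.range K.row)
  let P : Set n := {c | ∃ w ∈ W, (∀ j < c, w j = 0) ∧ w c ≠ 0}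
  have hrestrict :
      Function.Injective ((LinearMap.funLeft F F ((↑) : P → n)).comp W.subtype) := by
    refine (injective_iff_map_eq_zero _).mpr fun ⟨w, hw⟩ h0 => ?_
    by_contra hne
    obtain ⟨c, hc, hmin⟩ := wellFounded_lt.has_min {j | w j ≠ 0}
      (Function.ne_iff.mp (Subtype.coe_ne_coe.mpr hne))
    have hcP : c ∈ P := ⟨w, hw, fun j hj => not_not.mp fun hwj => hmin j hwj hj, hc⟩
    exact hc (congrFun h0 ⟨c, hcP⟩)
  have hcard : Fintype.card m ≤ Fintype.card P := by
    have := LinearMap.finrank_le_finrank_of_injective hrestrict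
    rwa [← rank_eq_finrank_span_row, hK, Module.finrank_fintype_fun_eq_card] at this
  obtain ⟨emb⟩ := Function.Embedding.nonempty_of_card_le hcard
  choose w hwW hlead using fun i => (emb i).2
  choose U hU using fun i => (Submodule.mem_span_range_iff_exists_fun F).mp (hwW i)
  refine ⟨of U, fun i => emb i, Subtype.val_injective.comp emb.injective, fun i => ?_⟩
  have hrow : (of U * K) i = w i := by
    ext j
    simp [mul_apply, ← hU i, Finset.sum_apply]
  simpa only [IsLeadingEntry, ← hrow] using hlead i

theorem det_submatrix_fromRows_ne_zero {m n p F : Type*} [Fintype m] [Fintype n] [Fintype p]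
    [DecidableEq n] [DecidableEq p] [Field F] (L : Matrix m n F) (q : m → n)
    (hq : Function.Injective q) (hL : ∀ i j, j ≠ q i → L i j = 0) (hLq : ∀ i, L i (q i) ≠ 0)
    (B : Matrix p n F)
    (hB : ∀ cols : p → n, Function.Injective cols → (B.submatrix id cols).det ≠ 0)
    (e : n ≃ m ⊕ p) : ((fromRows L B).submatrix e id).det ≠ 0 := by
  classical
  rw [Ne, ← exists_mulVec_eq_zero_iff]
  rintro ⟨v, hv, hLBv⟩
  have hrow : ∀ x, (fromRows L B *ᵥ v) x = 0 := fun x => by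
    have h := congrFun hLBv (e.symm x)
    change (fromRows L B *ᵥ v) (e (e.symm x)) = 0 at h
    rwa [Equiv.apply_symm_apply] at h
  have hLv : L *ᵥ v = 0 := funext fun i => by simpa using hrow (.inl i)
  have hBv : B *ᵥ v = 0 := funext fun k => by simpa using hrow (.inr k)
  have hvq : ∀ i, v (q i) = 0 := fun i => by
    have h := congrFun hLv i
    rw [Pi.zero_apply, mulVec, dotProduct, Finset.sum_eq_single (q i)
      (fun j _ hj => by rw [hL i j hj, zero_mul]) (by simp)] at h
    exact (mul_eq_zero.mp h).resolve_left (hLq i)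
  obtain ⟨c⟩ : Nonempty (p ≃ {j // j ∉ Set.range q}) := by
    refine Fintype.card_eq.mp ?_
    rw [Fintype.card_subtype_compl, Set.card_range_of_injective hq, Fintype.card_congr e,
      Fintype.card_sum]
    omega
  set cols : p → n := fun k => (c k : n)
  have hcols : Function.Injective cols := Subtype.val_injective.comp c.injective
  have hBv' : B.submatrix id cols *ᵥ (v ∘ cols) = 0 := by
    ext k
    rw [← congrFun hBv k]
    refine Fintype.sum_of_injective cols hcols _ _ (fun j hj => ?_) (fun _ => rfl)
    obtain ⟨i, rfl⟩ : j ∈ Set.range q := by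
      by_contra hjq
      exact hj ⟨c.symm ⟨j, hjq⟩, by simp [cols]⟩
    rw [hvq, mul_zero]
  have hvcols := eq_zero_of_mulVec_eq_zero (hB cols hcols) hBv'
  refine hv (funext fun j => ?_)
  by_cases hjq : j ∈ Set.range q
  · obtain ⟨i, rfl⟩ := hjq
    exact hvq i
  · simpa [cols] using congrFun hvcols (c.symm ⟨j, hjq⟩)

end Matrix

open Matrix in
theorem det_fromRows_monomial_ne_zero {F : Type*} [Field F] {m p : ℕ}
    (Mcoef : Matrix (Fin p) (Fin (m + p)) F)
    (hzero : ∀ (i : Fin p) (j : Fin (m + p)), (j : ℕ) < i → Mcoef i j = 0)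
    (hMDS : ∀ cols : Fin p → Fin (m + p), Function.Injective cols →
      (Mcoef.submatrix id cols).det ≠ 0)
    (Mpoly : Matrix (Fin p) (Fin (m + p)) F[X])
    (hMpoly : ∀ (i : Fin p) (j : Fin (m + p)),
      Mpoly i j = C (Mcoef i j) * X ^ ((j : ℕ) - (i : ℕ)))
    (R : Matrix (Fin m) (Fin (m + p)) F) (q : Fin m → Fin (m + p)) (hq : Function.Injective q)
    (hR : ∀ i, R.IsLeadingEntry i (q i)) :
    ((fromRows (R.map C) Mpoly).submatrix
        (finSumFinEquiv.symm : Fin (m + p) ≃ Fin m ⊕ Fin p) id).det ≠ 0 := by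
  set e : Fin (m + p) ≃ Fin m ⊕ Fin p := finSumFinEquiv.symm
  let a : Fin (m + p) → ℕ := fun r =>
    Sum.elim (fun i : Fin m => (q i : ℕ)) (fun l : Fin p => (l : ℕ)) (e r)
  refine det_ne_zero_of_det_coeff_ne_zero _ a (fun j => j) (fun r j k hk => ?_) ?_
  · rcases hr : e r with i | l <;>
      simp only [a, hr, submatrix_apply, id, fromRows_apply_inl, fromRows_apply_inr, map_apply,
        hMpoly, coeff_C, coeff_C_mul_X_pow, Sum.elim_inl, Sum.elim_inr] at hk ⊢
    · rw [ite_ne_right_iff] at hk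
      obtain ⟨rfl, hRij⟩ := hk
      have := Fin.le_def.mp (not_lt.mp fun h => hRij ((hR i).1 j h))
      omega
    · rw [ite_ne_right_iff] at hk
      obtain ⟨rfl, hMlj⟩ := hk
      have := not_lt.mp fun h => hMlj (hzero l j h)
      omega
  · let L : Matrix (Fin m) (Fin (m + p)) F := of fun i j => (C (R i j)).coeff ((j : ℕ) - q i)
    have hL : (of fun r j => (((fromRows (R.map C) Mpoly).submatrix e id) r j).coeff (j - a r))
        = (fromRows L Mcoef).submatrix e id := by
      ext r j
      rcases hr : e r with i | l <;> simp [a, L, hr, hMpoly]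
    rw [hL]
    refine det_submatrix_fromRows_ne_zero L q hq (fun i j hj => ?_) (fun i => ?_) Mcoef hMDS e
    · simp only [L, of_apply, coeff_C]
      split_ifs with h
      · exact (hR i).1 j (lt_of_le_of_ne (Fin.le_def.mpr (by omega)) hj)
      · rfl
    · simpa [L] using (hR i).2

/-- Let `M(s)` be the `p × (m+p)` monomial matrix with MDS coefficient matrix
`Mcoef = [I_p R]` (all `p × p` minors of `Mcoef` nonzero) and degree matrix
`d_{i,j} = j − i` for `j ≥ i` and `0` otherwise, i.e. `M(s)_{i,j} = Mcoef_{i,j} s^{j−i}`.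
Then for every full-rank `m × (m+p)` matrix `[K₁ K₂]` over `F`, the polynomial
`det [[K₁ K₂], [M(s)]]` is not the zero polynomial. -/
theorem stmt16 (F : Type*) [Field F] (p m : ℕ)
    (Mcoef : Matrix (Fin p) (Fin (m + p)) F)
    (hform : ∀ (i : Fin p) (j : Fin (m + p)), (j : ℕ) < p →
      Mcoef i j = if (i : ℕ) = (j : ℕ) then 1 else 0)
    (hMDS : ∀ cols : Fin p → Fin (m + p), Function.Injective cols →
      (Mcoef.submatrix id cols).det ≠ 0)
    (Mpoly : Matrix (Fin p) (Fin (m + p)) F[X])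
    (hMpoly : ∀ (i : Fin p) (j : Fin (m + p)),
      Mpoly i j = C (Mcoef i j) * X ^ ((j : ℕ) - (i : ℕ)))
    (K : Matrix (Fin m) (Fin (m + p)) F) (hK : K.rank = m) :
    ((Matrix.fromRows (K.map C) Mpoly).submatrix
        (finSumFinEquiv.symm : Fin (m + p) ≃ Fin m ⊕ Fin p) id).det ≠ 0 := by
  have hzero : ∀ (i : Fin p) (j : Fin (m + p)), (j : ℕ) < i → Mcoef i j = 0 :=
    fun i j hij => by rw [hform i j (hij.trans i.isLt), if_neg (by omega)]
  obtain ⟨U, q, hq, hlead⟩ :=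
    Matrix.exists_mul_isLeadingEntry_injective K (by rw [hK, Fintype.card_fin])
  have hUK := det_fromRows_monomial_ne_zero Mcoef hzero hMDS Mpoly hMpoly (U * K) q hq hlead
  rw [Matrix.map_mul, Matrix.det_submatrix_fromRows_mul_left] at hUK
  exact right_ne_zero_of_mul hUK
end
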